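/- arXiv:2507.14440 — 5 statements merged into one kernel-verified Lean document; each statement's English description precedes it below -/
import Mathlib

section
/- Let c₀, a₀, d₁ > 0, let x ∈ ℝ³, and let a : ℝ → ℝ³ be twice differentiable with ‖deriv a t‖ ≤ c₀, ‖deriv (deriv a) t‖ ≤ a₀ and ‖x - a t‖ ≥ d₁ for every t ∈ ℝ. Then the distance function v(t) := ‖x - a t‖ is twice differentiable on ℝ and its second derivative satisfies |deriv (deriv v) t| ≤ a₀ + 2·c₀²/d₁ for every t ∈ ℝ. -/
/-!
Write `u = x - a`, so `v = ‖u‖` with `u` nowhere zero. Then `v' = ⟪u, u'⟫ / ‖u‖` and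
`v'' = ⟪u, u''⟫ / ‖u‖ + (‖u'‖² - (⟪u, u'⟫ / ‖u‖)²) / ‖u‖`. The bracket is the squared tangential
part of `u'`, so it lies in `[0, ‖u'‖²]`, and Cauchy–Schwarz gives
`|v''| ≤ ‖u''‖ + ‖u'‖² / ‖u‖ ≤ a₀ + c₀² / d₁`.
-/

noncomputable section

abbrev E3 := EuclideanSpace ℝ (Fin 3)

open RealInnerProductSpace

section NormDeriv

variable {E : Type*} [NormedAddCommGroup E] [InnerProductSpace ℝ E] {u : ℝ → E} {u' : E} {t : ℝ}

theorem HasDerivAt.norm (hu : HasDerivAt u u' t) (h0 : u t ≠ 0) :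
    HasDerivAt (fun s => ‖u s‖) (⟪u t, u'⟫ / ‖u t‖) t := by
  have hsq : ‖u t‖ ^ 2 ≠ 0 := pow_ne_zero 2 (norm_ne_zero_iff.mpr h0)
  have h := hu.norm_sq.sqrt hsq
  simp only [Real.sqrt_sq (norm_nonneg _)] at h
  rwa [mul_div_mul_left _ _ two_ne_zero] at h

theorem deriv_norm_eq (hu : Differentiable ℝ u) (h0 : ∀ s, u s ≠ 0) :
    deriv (fun s => ‖u s‖) = fun s => ⟪u s, deriv u s⟫ / ‖u s‖ :=
  funext fun s => ((hu s).hasDerivAt.norm (h0 s)).deriv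

theorem hasDerivAt_deriv_norm (hu : Differentiable ℝ u) (hu' : DifferentiableAt ℝ (deriv u) t)
    (h0 : ∀ s, u s ≠ 0) :
    HasDerivAt (deriv fun s => ‖u s‖)
      ((⟪u t, deriv (deriv u) t⟫ + ‖deriv u t‖ ^ 2 - (⟪u t, deriv u t⟫ / ‖u t‖) ^ 2) / ‖u t‖)
      t := by
  rw [deriv_norm_eq hu h0]
  have hn : ‖u t‖ ≠ 0 := norm_ne_zero_iff.mpr (h0 t)
  refine (((hu t).hasDerivAt.inner ℝ hu'.hasDerivAt).div
    ((hu t).hasDerivAt.norm (h0 t)) hn).congr_deriv ?_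
  rw [real_inner_self_eq_norm_sq]
  field_simp

theorem abs_inner_add_norm_sq_sub_div_le (p v w : E) (hp : p ≠ 0) :
    |(⟪p, w⟫ + ‖v‖ ^ 2 - (⟪p, v⟫ / ‖p‖) ^ 2) / ‖p‖| ≤ ‖w‖ + ‖v‖ ^ 2 / ‖p‖ := by
  have hn : 0 < ‖p‖ := norm_pos_iff.mpr hp
  have hradial : |⟪p, v⟫ / ‖p‖| ≤ ‖v‖ := by
    rw [abs_div, abs_norm, div_le_iff₀ hn, mul_comm]
    exact abs_real_inner_le_norm p v
  have htangential : |‖v‖ ^ 2 - (⟪p, v⟫ / ‖p‖) ^ 2| ≤ ‖v‖ ^ 2 := by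
    rw [abs_of_nonneg (sub_nonneg.mpr (sq_le_sq' (abs_le.mp hradial).1 (abs_le.mp hradial).2))]
    linarith [sq_nonneg (⟪p, v⟫ / ‖p‖)]
  have hw : |⟪p, w⟫ / ‖p‖| ≤ ‖w‖ := by
    rw [abs_div, abs_norm, div_le_iff₀ hn, mul_comm]
    exact abs_real_inner_le_norm p w
  calc |(⟪p, w⟫ + ‖v‖ ^ 2 - (⟪p, v⟫ / ‖p‖) ^ 2) / ‖p‖|
      = |⟪p, w⟫ / ‖p‖ + (‖v‖ ^ 2 - (⟪p, v⟫ / ‖p‖) ^ 2) / ‖p‖| := by ring_nf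
    _ ≤ |⟪p, w⟫ / ‖p‖| + |‖v‖ ^ 2 - (⟪p, v⟫ / ‖p‖) ^ 2| / ‖p‖ := by
      rw [← abs_norm p, ← abs_div, abs_norm]; exact abs_add_le _ _
    _ ≤ ‖w‖ + ‖v‖ ^ 2 / ‖p‖ := by gcongr

end NormDeriv

theorem stmt_2_general (c₀ a₀ d₁ : ℝ) (hd₁ : 0 < d₁)
    (x : E3) (a : ℝ → E3)
    (ha : Differentiable ℝ a) (ha' : Differentiable ℝ (deriv a))
    (hspeed : ∀ t : ℝ, ‖deriv a t‖ ≤ c₀)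
    (hacc : ∀ t : ℝ, ‖deriv (deriv a) t‖ ≤ a₀)
    (hdist : ∀ t : ℝ, d₁ ≤ ‖x - a t‖) :
    Differentiable ℝ (fun t : ℝ => ‖x - a t‖) ∧
    Differentiable ℝ (deriv (fun t : ℝ => ‖x - a t‖)) ∧
    (∀ t : ℝ, |deriv (deriv (fun t : ℝ => ‖x - a t‖)) t| ≤ a₀ + 2 * c₀ ^ 2 / d₁) := by
  set u : ℝ → E3 := fun t => x - a t
  have hu : Differentiable ℝ u := (differentiable_const x).sub ha
  have hu0 : ∀ t, u t ≠ 0 := fun t => norm_pos_iff.mp (hd₁.trans_le (hdist t))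
  have hdu : deriv u = fun t => -deriv a t :=
    funext fun t => ((ha t).hasDerivAt.const_sub x).deriv
  have hddu : deriv (deriv u) = fun t => -deriv (deriv a) t := by
    rw [hdu]; exact deriv.neg'
  have hu' : Differentiable ℝ (deriv u) := by rw [hdu]; exact ha'.neg
  have hv'' := fun t => hasDerivAt_deriv_norm hu (hu' t) hu0
  refine ⟨hu.norm ℝ hu0, fun t => (hv'' t).differentiableAt, fun t => ?_⟩
  rw [(hv'' t).deriv]
  calc _ ≤ ‖deriv (deriv u) t‖ + ‖deriv u t‖ ^ 2 / ‖u t‖ :=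
        abs_inner_add_norm_sq_sub_div_le _ _ _ (hu0 t)
    _ ≤ a₀ + c₀ ^ 2 / d₁ := by
        rw [hddu, hdu, norm_neg, norm_neg]
        gcongr
        exacts [hacc t, hspeed t, hdist t]
    _ ≤ a₀ + 2 * c₀ ^ 2 / d₁ := by gcongr; linarith [sq_nonneg c₀]

/-- For a twice differentiable orbit `a` with speed bound `c₀`,
acceleration bound `a₀`, staying at distance at least `d₁` from the observation point `x`,
the distance function `v t = ‖x - a t‖` is twice differentiable and
`|v'' t| ≤ a₀ + 2 c₀² / d₁`. -/
theorem stmt_2 (c₀ a₀ d₁ : ℝ) (hc₀ : 0 < c₀) (ha₀ : 0 < a₀) (hd₁ : 0 < d₁)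
    (x : E3) (a : ℝ → E3)
    (ha : Differentiable ℝ a) (ha' : Differentiable ℝ (deriv a))
    (hspeed : ∀ t : ℝ, ‖deriv a t‖ ≤ c₀)
    (hacc : ∀ t : ℝ, ‖deriv (deriv a) t‖ ≤ a₀)
    (hdist : ∀ t : ℝ, d₁ ≤ ‖x - a t‖) :
    Differentiable ℝ (fun t : ℝ => ‖x - a t‖) ∧
    Differentiable ℝ (deriv (fun t : ℝ => ‖x - a t‖)) ∧
    (∀ t : ℝ, |deriv (deriv (fun t : ℝ => ‖x - a t‖)) t| ≤ a₀ + 2 * c₀ ^ 2 / d₁) :=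
  stmt_2_general c₀ a₀ d₁ hd₁ x a ha ha' hspeed hacc hdist
end
end

section
/- Let 0 < c₀ < c and 0 < d₁ ≤ d₀ be real numbers, let x ∈ ℝ³, and let a : ℝ → ℝ³ be continuously differentiable with ‖deriv a t‖ ≤ c₀ and d₁ ≤ ‖x - a t‖ ≤ d₀ for every t ∈ ℝ. Then the function g(t) := t + ‖x - a t‖/c is a bijection of ℝ onto ℝ, its inverse G := g⁻¹ is continuous and strictly monotone increasing, and G is differentiable at every point s = g t with deriv G (g t) = c / (c + deriv v t), where v(t) := ‖x - a t‖. -/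
/-!
The source moves slower than the wave, so `v t / c` is a contraction of `ℝ` with constant
`c₀ / c < 1`. Hence `g = id + v / c` grows at rate at least `1 - c₀ / c > 0`: it is an order
isomorphism of `ℝ`, its inverse is continuous, and the inverse function theorem in one variable
gives `G'(g t) = 1 / g'(t) = c / (c + v'(t))`, where `g'(t) ≠ 0` because `|v'(t)| ≤ c₀ < c`.
-/

noncomputable section

open Function Filter NNReal

namespace LipschitzWith

variable {φ : ℝ → ℝ} {K : ℝ≥0}

theorem mul_sub_le_id_add_sub (hφ : LipschitzWith K φ) {s t : ℝ} (hst : s ≤ t) :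
    (1 - K) * (t - s) ≤ t + φ t - (s + φ s) := by
  have h : |φ t - φ s| ≤ K * (t - s) := by
    simpa [Real.dist_eq, abs_of_nonneg (sub_nonneg.2 hst)] using hφ.dist_le_mul t s
  linarith [neg_abs_le (φ t - φ s)]

theorem strictMono_id_add (hφ : LipschitzWith K φ) (hK : K < 1) :
    StrictMono fun t => t + φ t := fun s t hst => by
  have hK' : (0 : ℝ) < 1 - K := sub_pos.2 (by exact_mod_cast hK)
  linarith [hφ.mul_sub_le_id_add_sub hst.le, mul_pos hK' (sub_pos.2 hst)]

theorem surjective_id_add (hφ : LipschitzWith K φ) (hK : K < 1) :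
    Surjective fun t => t + φ t := by
  have hK' : (0 : ℝ) < 1 - K := sub_pos.2 (by exact_mod_cast hK)
  have hlin : Tendsto (fun t => (1 - K) * t + φ 0) atTop atTop :=
    tendsto_atTop_add_const_right _ _ (tendsto_id.const_mul_atTop hK')
  have hlin' : Tendsto (fun t => (1 - K) * t + φ 0) atBot atBot :=
    tendsto_atBot_add_const_right _ _ (tendsto_id.const_mul_atBot hK')
  refine (show Continuous fun t => t + φ t from continuous_id.add hφ.continuous).surjective ?_ ?_
  · refine tendsto_atTop_mono' _ ?_ hlin
    filter_upwards [eventually_ge_atTop 0] with t ht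
    linarith [hφ.mul_sub_le_id_add_sub ht]
  · refine tendsto_atBot_mono' _ ?_ hlin'
    filter_upwards [eventually_le_atBot 0] with t ht
    linarith [hφ.mul_sub_le_id_add_sub ht]

theorem one_add_ne_zero_of_hasDerivAt (hφ : LipschitzWith K φ) (hK : K < 1) {φ' t : ℝ}
    (h : HasDerivAt φ φ' t) : 1 + φ' ≠ 0 := by
  have hle : |φ'| ≤ K := h.deriv ▸ norm_deriv_le_of_lipschitz hφ
  have hK' : (K : ℝ) < 1 := by exact_mod_cast hK
  linarith [neg_abs_le φ']

end LipschitzWith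

theorem StrictMono.invFun_eq_orderIsoOfSurjective_symm {α β : Type*} [LinearOrder α]
    [Preorder β] [Nonempty α] {f : α → β} (hf : StrictMono f) (hs : Surjective f) :
    invFun f = (hf.orderIsoOfSurjective f hs).symm := by
  funext y
  apply hf.injective
  rw [invFun_eq (hs y)]
  exact (hf.orderIsoOfSurjective_self_symm_apply f hs y).symm

theorem HasDerivAt.invFun_of_bijective {𝕜 : Type*} [NontriviallyNormedField 𝕜] {f : 𝕜 → 𝕜}
    {f' t : 𝕜} (hf : Bijective f) (hcont : Continuous (invFun f)) (h : HasDerivAt f f' t)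
    (hf' : f' ≠ 0) : HasDerivAt (invFun f) f'⁻¹ (f t) := by
  refine .of_local_left_inverse hcont.continuousAt ?_ hf'
    (.of_forall (rightInverse_invFun hf.surjective))
  rwa [leftInverse_invFun hf.injective]

theorem lipschitzWith_norm_sub_div {E : Type*} [NormedAddCommGroup E] [NormedSpace ℝ E]
    {a : ℝ → E} {C c : ℝ} (ha : Differentiable ℝ a) (hC : ∀ t, ‖deriv a t‖ ≤ C) (hc : 0 < c)
    (x : E) : LipschitzWith (C / c).toNNReal fun t => ‖x - a t‖ / c := by
  refine .of_dist_le' fun s t => ?_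
  have hlip : ‖a s - a t‖ ≤ C * ‖s - t‖ :=
    convex_univ.norm_image_sub_le_of_norm_deriv_le (fun y _ => ha y) (fun y _ => hC y)
      (Set.mem_univ t) (Set.mem_univ s)
  have hnorm : |‖x - a s‖ - ‖x - a t‖| ≤ ‖a s - a t‖ :=
    (abs_norm_sub_norm_le _ _).trans_eq (by rw [sub_sub_sub_cancel_left, norm_sub_rev])
  rw [Real.dist_eq, Real.dist_eq, div_sub_div_same, abs_div, abs_of_pos hc, div_mul_eq_mul_div,
    ← Real.norm_eq_abs (s - t)]
  gcongr
  exact hnorm.trans hlip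

theorem stmt_3_general (c c₀ d₁ d₀ : ℝ) (hc₀c : c₀ < c)
    (hd₁ : 0 < d₁)
    (x : E3) (a : ℝ → E3)
    (ha : ContDiff ℝ 1 a)
    (hspeed : ∀ t : ℝ, ‖deriv a t‖ ≤ c₀)
    (hdist : ∀ t : ℝ, d₁ ≤ ‖x - a t‖ ∧ ‖x - a t‖ ≤ d₀) :
    Function.Bijective (fun t : ℝ => t + ‖x - a t‖ / c) ∧
    Continuous (Function.invFun (fun t : ℝ => t + ‖x - a t‖ / c)) ∧
    StrictMono (Function.invFun (fun t : ℝ => t + ‖x - a t‖ / c)) ∧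
    (∀ t : ℝ,
      HasDerivAt (Function.invFun (fun t : ℝ => t + ‖x - a t‖ / c))
        (c / (c + deriv (fun r : ℝ => ‖x - a r‖) t))
        (t + ‖x - a t‖ / c)) := by
  have hc : 0 < c := ((norm_nonneg _).trans (hspeed 0)).trans_lt hc₀c
  have hda : Differentiable ℝ a := ha.differentiable one_ne_zero
  have hφ := lipschitzWith_norm_sub_div hda hspeed hc x
  have hK : (c₀ / c).toNNReal < 1 := Real.toNNReal_lt_one.2 ((div_lt_one hc).2 hc₀c)
  have hmono := hφ.strictMono_id_add hK
  have hbij : Bijective fun t : ℝ => t + ‖x - a t‖ / c :=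
    ⟨hmono.injective, hφ.surjective_id_add hK⟩
  have hinv := hmono.invFun_eq_orderIsoOfSurjective_symm hbij.surjective
  have hcont : Continuous (invFun fun t : ℝ => t + ‖x - a t‖ / c) := hinv ▸ OrderIso.continuous _
  refine ⟨hbij, hcont, hinv ▸ OrderIso.strictMono _, fun t => ?_⟩
  have hv : HasDerivAt (fun r => ‖x - a r‖) (deriv (fun r => ‖x - a r‖) t) t :=
    ((differentiableAt_const x).sub (hda t)).norm ℝ
      (norm_pos_iff.1 (hd₁.trans_le (hdist t).1)) |>.hasDerivAt
  have hg : HasDerivAt (fun t => t + ‖x - a t‖ / c) (1 + deriv (fun r => ‖x - a r‖) t / c) t :=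
    (hasDerivAt_id' t).add (hv.div_const c)
  rw [← inv_div, ← one_add_div hc.ne']
  exact hg.invFun_of_bijective hbij hcont (hφ.one_add_ne_zero_of_hasDerivAt hK (hv.div_const c))

/-- For `0 < c₀ < c`, `0 < d₁ ≤ d₀` and a `C¹` orbit `a` with speed bound `c₀`
and distance bounds `d₁ ≤ ‖x - a t‖ ≤ d₀`, the map `g t = t + ‖x - a t‖ / c` is a bijection of
`ℝ` onto `ℝ`, its inverse `G = g⁻¹` is continuous and strictly monotone increasing, and
`G` is differentiable at each `s = g t` with `G'(g t) = c / (c + v' t)`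
where `v t = ‖x - a t‖`. -/
theorem stmt_3 (c c₀ d₁ d₀ : ℝ) (hc₀ : 0 < c₀) (hc₀c : c₀ < c)
    (hd₁ : 0 < d₁) (hd₁d₀ : d₁ ≤ d₀)
    (x : E3) (a : ℝ → E3)
    (ha : ContDiff ℝ 1 a)
    (hspeed : ∀ t : ℝ, ‖deriv a t‖ ≤ c₀)
    (hdist : ∀ t : ℝ, d₁ ≤ ‖x - a t‖ ∧ ‖x - a t‖ ≤ d₀) :
    Function.Bijective (fun t : ℝ => t + ‖x - a t‖ / c) ∧
    Continuous (Function.invFun (fun t : ℝ => t + ‖x - a t‖ / c)) ∧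
    StrictMono (Function.invFun (fun t : ℝ => t + ‖x - a t‖ / c)) ∧
    (∀ t : ℝ,
      HasDerivAt (Function.invFun (fun t : ℝ => t + ‖x - a t‖ / c))
        (c / (c + deriv (fun r : ℝ => ‖x - a r‖) t))
        (t + ‖x - a t‖ / c)) :=
  stmt_3_general c c₀ d₁ d₀ hc₀c hd₁ x a ha hspeed hdist
end
end

section
/- Let 0 < c₀ < c, a₀ > 0, 0 < d₁ ≤ d₀, T₀ > 0, let x ∈ ℝ³, and let a : ℝ → ℝ³ be twice continuously differentiable with ‖deriv a t‖ ≤ c₀, ‖deriv (deriv a) t‖ ≤ a₀ and d₁ ≤ ‖x - a t‖ ≤ d₀ for all t. Let f : ℝ → ℝ³ be continuously differentiable, ν ∈ ℝ³, i ∈ Fin 3, and let Hν be the tangential field of the orbit a. Assume there is m > 0 with |(Hν s) i| ≥ m for every s ∈ (g 0, T₀ + d₀/c]. If w : ℝ → ℝ is continuously differentiable on [0, T₀] with w 0 = ‖x - a 0‖, d₁ ≤ w t ≤ d₀ and t + w t / c > g 0 for all t ∈ (0, T₀], and w satisfies deriv w t = c · (f t ×₃ ν) i / (4π · w t · (Hν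 (t + w t / c)) i) − c for all t ∈ (0, T₀], then w t = ‖x - a t‖ for every t ∈ [0, T₀]; in particular the initial value problem has exactly one such solution. -/
noncomputable section

/-- The cross product on `ℝ³`. -/
def cross3 (u v : E3) : E3 :=
  WithLp.toLp 2 ![u 1 * v 2 - u 2 * v 1, u 2 * v 0 - u 0 * v 2, u 0 * v 1 - u 1 * v 0]

/-- `Hν` is the tangential field of the orbit `a` (relative to the observation point `x`,
the source profile `f` and the vector `ν`, with wave speed `c`). -/
def tangentialField (c : ℝ) (x : E3) (a f : ℝ → E3) (ν : E3) (Hν : ℝ → E3) : Prop :=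
  (∀ s : ℝ, s < ‖x - a 0‖ / c → Hν s = 0) ∧
  (∀ t : ℝ, 0 ≤ t →
    Hν (t + ‖x - a t‖ / c) =
      (c / (4 * Real.pi * ‖x - a t‖ * (c + deriv (fun r : ℝ => ‖x - a r‖) t))) •
        cross3 (f t) ν)

/-!
The distance `v t = ‖x - a t‖` itself solves the initial value problem: evaluated at the arrival
time `g t = t + v t / c`, the defining identity of the tangential field is the equation
`v' = c (f ×₃ ν)ᵢ / (4π v (Hν (g t))ᵢ) - c` rearranged. Uniqueness then follows from Grönwall's
inequality once the right-hand side is Lipschitz in `y`, uniformly in `t`. Pulled back by `g`, the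
component `(Hν ·)ᵢ` is the `C¹` function `c (f ×₃ ν)ᵢ / (4π v (c + v'))`, and `g` is
bi-Lipschitz because `|v'| ≤ c₀ < c`; hence `(Hν ·)ᵢ` is Lipschitz on the retarded interval.
Together with `|(Hν ·)ᵢ| ≥ m` and `y ≥ d₁` this makes `y ↦ 1 / (y (Hν (t + y / c))ᵢ)` Lipschitz.
-/

open Set NNReal Filter Topology Real

section Lipschitz

variable {α : Type*} [PseudoMetricSpace α] {s : Set α}

lemma LipschitzOnWith.mul_of_norm_le {R : Type*} [SeminormedRing R] {f g : α → R}
    {Kf Kg Bf Bg : ℝ≥0} (hf : LipschitzOnWith Kf f s) (hg : LipschitzOnWith Kg g s)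
    (hBf : ∀ x ∈ s, ‖f x‖ ≤ Bf) (hBg : ∀ x ∈ s, ‖g x‖ ≤ Bg) :
    LipschitzOnWith (Bf * Kg + Bg * Kf) (fun x => f x * g x) s := by
  refine LipschitzOnWith.of_dist_le_mul fun x hx y hy => ?_
  rw [dist_eq_norm]
  calc ‖f x * g x - f y * g y‖ = ‖f x * (g x - g y) + (f x - f y) * g y‖ := by
        congr 1; noncomm_ring
    _ ≤ ‖f x‖ * ‖g x - g y‖ + ‖f x - f y‖ * ‖g y‖ :=
        (norm_add_le _ _).trans (add_le_add (norm_mul_le _ _) (norm_mul_le _ _))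
    _ ≤ Bf * (Kg * dist x y) + Kf * dist x y * Bg := by
        rw [← dist_eq_norm, ← dist_eq_norm]
        exact add_le_add (mul_le_mul (hBf x hx) (hg.dist_le_mul x hx y hy) dist_nonneg Bf.2)
          (mul_le_mul (hf.dist_le_mul x hx y hy) (hBg y hy) (norm_nonneg _) (by positivity))
    _ = ↑(Bf * Kg + Bg * Kf) * dist x y := by push_cast; ring

lemma LipschitzOnWith.inv_of_le_norm {𝕜 : Type*} [NormedDivisionRing 𝕜] {f : α → 𝕜}
    {K δ : ℝ≥0} (hf : LipschitzOnWith K f s) (hδ : 0 < δ) (hfδ : ∀ x ∈ s, δ ≤ ‖f x‖) :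
    LipschitzOnWith (K / δ ^ 2) (fun x => (f x)⁻¹) s := by
  refine LipschitzOnWith.of_dist_le_mul fun x hx y hy => ?_
  have hδ' : (0 : ℝ) < δ := hδ
  have hx0 : f x ≠ 0 := norm_pos_iff.mp (hδ'.trans_le (hfδ x hx))
  have hy0 : f y ≠ 0 := norm_pos_iff.mp (hδ'.trans_le (hfδ y hy))
  calc dist (f x)⁻¹ (f y)⁻¹ = dist (f x) (f y) / (‖f x‖ * ‖f y‖) := by
        rw [dist_eq_norm, inv_sub_inv' hx0 hy0, norm_mul, norm_mul, norm_inv, norm_inv,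
          ← dist_eq_norm']
        field_simp
    _ ≤ K * dist x y / (δ * δ) := by
        gcongr
        exacts [hf.dist_le_mul x hx y hy, hfδ x hx, hfδ y hy]
    _ = ↑(K / δ ^ 2) * dist x y := by push_cast; ring

end Lipschitz

lemma AntilipschitzWith.lipschitzOnWith_image {α β γ : Type*} [PseudoEMetricSpace α]
    [PseudoEMetricSpace β] [PseudoEMetricSpace γ] {g : α → β} {h : β → γ} {P : α → γ}
    {s : Set α} {Kg KP : ℝ≥0} (hg : AntilipschitzWith Kg g) (hP : LipschitzOnWith KP P s)
    (hhg : EqOn (h ∘ g) P s) : LipschitzOnWith (KP * Kg) h (g '' s) := by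
  rintro _ ⟨x, hx, rfl⟩ _ ⟨y, hy, rfl⟩
  calc edist (h (g x)) (h (g y)) = edist (P x) (P y) := by rw [← hhg hx, ← hhg hy]; rfl
    _ ≤ KP * edist x y := hP hx hy
    _ ≤ KP * (Kg * edist (g x) (g y)) := by gcongr; exact hg x y
    _ = ↑(KP * Kg) * edist (g x) (g y) := by rw [ENNReal.coe_mul, mul_assoc]

section ODE

variable {E : Type*} [NormedAddCommGroup E] [NormedSpace ℝ E]
  {v : ℝ → E → E} {s : ℝ → Set E} {K : ℝ≥0} {f g : ℝ → E} {a b : ℝ}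

theorem ODE_solution_unique_of_mem_Icc_of_hasDerivAt_Ioo
    (hv : ∀ t ∈ Ioo a b, LipschitzOnWith K (v t) (s t))
    (hf : ContinuousOn f (Icc a b)) (hf' : ∀ t ∈ Ioo a b, HasDerivAt f (v t (f t)) t)
    (hfs : ∀ t ∈ Ioo a b, f t ∈ s t)
    (hg : ContinuousOn g (Icc a b)) (hg' : ∀ t ∈ Ioo a b, HasDerivAt g (v t (g t)) t)
    (hgs : ∀ t ∈ Ioo a b, g t ∈ s t)
    (ha : f a = g a) :
    EqOn f g (Icc a b) := by
  intro t ht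
  rcases ht.1.eq_or_lt with rfl | hat
  · exact ha
  have hsub : ∀ ε ∈ Ioo a t, Ico ε t ⊆ Ioo a b := fun ε hε =>
    Ico_subset_Ioo_left hε.1 |>.trans (Ioo_subset_Ioo_right ht.2)
  -- Grönwall from every later starting time `ε`, then let `ε → a`.
  have hgronwall : ∀ ε ∈ Ioo a t,
      dist (f t) (g t) ≤ dist (f ε) (g ε) * Real.exp (K * (t - ε)) := fun ε hε =>
    dist_le_of_trajectories_ODE_of_mem (fun τ hτ => hv τ (hsub ε hε hτ))
      (hf.mono (Icc_subset_Icc hε.1.le ht.2)) (fun τ hτ => (hf' τ (hsub ε hε hτ)).hasDerivWithinAt)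
      (fun τ hτ => hfs τ (hsub ε hε hτ))
      (hg.mono (Icc_subset_Icc hε.1.le ht.2)) (fun τ hτ => (hg' τ (hsub ε hε hτ)).hasDerivWithinAt)
      (fun τ hτ => hgs τ (hsub ε hε hτ)) le_rfl t ⟨hε.2.le, le_rfl⟩
  have hIcc : Icc a b ∈ 𝓝[>] a := Icc_mem_nhdsGT (hat.trans_le ht.2)
  have hlim : Tendsto (fun ε => dist (f ε) (g ε) * Real.exp (K * (t - ε))) (𝓝[>] a)
      (𝓝 (dist (f a) (g a) * Real.exp (K * (t - a)))) := by
    have hab : a ∈ Icc a b := left_mem_Icc.2 (hat.le.trans ht.2)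
    have hexp : Continuous fun ε => Real.exp (K * (t - ε)) := by fun_prop
    exact ((((hf a hab).mono_of_mem_nhdsWithin hIcc).dist
      ((hg a hab).mono_of_mem_nhdsWithin hIcc)).mul hexp.continuousWithinAt)
  have := ge_of_tendsto hlim (eventually_of_mem (Ioo_mem_nhdsGT hat) hgronwall)
  rw [ha, dist_self, zero_mul] at this
  exact dist_le_zero.mp this

end ODE

def arrivalTime (c : ℝ) (v : ℝ → ℝ) (t : ℝ) : ℝ := t + v t / c

section ArrivalTime

variable {c : ℝ} {v : ℝ → ℝ} {C : ℝ≥0}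

lemma add_deriv_pos_of_lipschitzWith (hv : LipschitzWith C v) (hCc : (C : ℝ) < c) (t : ℝ) :
    0 < c + deriv v t := by
  have h := norm_deriv_le_of_lipschitz (x₀ := t) hv
  rw [Real.norm_eq_abs] at h
  linarith [neg_abs_le (deriv v t)]

lemma strictMono_arrivalTime (hv : LipschitzWith C v) (hCc : (C : ℝ) < c) :
    StrictMono (arrivalTime c v) := by
  intro s t hst
  have hc : 0 < c := C.2.trans_lt hCc
  have hv_st : v s - v t < c * (t - s) := calc
    v s - v t ≤ dist (v s) (v t) := le_abs_self _
    _ ≤ C * dist s t := hv.dist_le_mul s t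
    _ = C * (t - s) := by rw [Real.dist_eq, abs_sub_comm, abs_of_pos (sub_pos.2 hst)]
    _ < c * (t - s) := by gcongr
  have : arrivalTime c v t - arrivalTime c v s = (c * (t - s) - (v s - v t)) / c := by
    unfold arrivalTime; field_simp; ring
  linarith [div_pos (sub_pos.2 hv_st) hc]

lemma antilipschitzWith_arrivalTime (hv : LipschitzWith C v) (hCc : (C : ℝ) < c) :
    AntilipschitzWith (1 - C / c.toNNReal)⁻¹ (arrivalTime c v) := by
  have hc : 0 < c := C.2.trans_lt hCc
  have hvc : LipschitzWith (C / c.toNNReal) fun t => v t / c := by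
    refine LipschitzWith.of_dist_le_mul fun s t => ?_
    rw [Real.dist_eq, div_sub_div_same, abs_div, abs_of_pos hc, NNReal.coe_div,
      Real.coe_toNNReal _ hc.le, div_mul_eq_mul_div, ← Real.dist_eq]
    gcongr
    exact hv.dist_le_mul s t
  have hCc' : C / c.toNNReal < 1⁻¹ := by
    rw [inv_one, div_lt_one (by simpa using hc)]
    simpa using (Real.toNNReal_lt_toNNReal_iff hc).2 hCc
  have h := AntilipschitzWith.id.add_lipschitzWith hvc hCc'
  rwa [inv_one] at h

lemma Icc_subset_image_arrivalTime (hc : 0 < c) (hv : Continuous v) (hv0 : ∀ t, 0 ≤ v t)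
    (b : ℝ) : Icc (v 0 / c) b ⊆ arrivalTime c v '' Icc 0 b := by
  intro s hs
  have hb : 0 ≤ b := (div_nonneg (hv0 0) hc.le).trans (hs.1.trans hs.2)
  have hgb : b ≤ arrivalTime c v b := le_add_of_nonneg_right (div_nonneg (hv0 b) hc.le)
  refine intermediate_value_Icc hb (continuous_id.add (hv.div_const c)).continuousOn ?_
  exact ⟨by simpa [arrivalTime] using hs.1, hs.2.trans hgb⟩

end ArrivalTime

lemma lipschitzWith_norm_sub_of_norm_deriv_le {E : Type*} [NormedAddCommGroup E]
    [NormedSpace ℝ E] {a : ℝ → E} {C : ℝ≥0} (ha : Differentiable ℝ a)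
    (hC : ∀ t, ‖deriv a t‖ ≤ C) (x : E) : LipschitzWith C fun t => ‖x - a t‖ := by
  have h := lipschitzWith_one_norm.comp
    ((LipschitzWith.const x).sub (lipschitzWith_of_nnnorm_deriv_le ha fun t => hC t))
  simpa [Function.comp_def] using h

def retardedRHS (c : ℝ) (A H : ℝ → ℝ) (t y : ℝ) : ℝ :=
  c * A t / (4 * π * y * H (t + y / c)) - c

lemma exists_lipschitzOnWith_retardedRHS {c d m B : ℝ} {A H : ℝ → ℝ} {J T : Set ℝ} {KH : ℝ≥0}
    (hc : 0 < c) (hd : 0 < d) (hm : 0 < m) (hH : LipschitzOnWith KH H J)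
    (hHm : ∀ s ∈ J, m ≤ |H s|) (hA : ∀ t ∈ T, |A t| ≤ B) :
    ∃ K, ∀ t ∈ T, LipschitzOnWith K (retardedRHS c A H t) {y | d ≤ y ∧ t + y / c ∈ J} := by
  set S : ℝ → Set ℝ := fun t => {y | d ≤ y ∧ t + y / c ∈ J}
  lift c to ℝ≥0 using hc.le
  lift d to ℝ≥0 using hd.le
  lift m to ℝ≥0 using hm.le
  have hshift : ∀ t, LipschitzWith c⁻¹ fun y : ℝ => t + y / c := fun t =>
    LipschitzWith.of_dist_le_mul fun y z => by
      rw [dist_add_left, Real.dist_eq, div_sub_div_same, abs_div, NNReal.abs_eq, NNReal.coe_inv,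
        ← Real.dist_eq, inv_mul_eq_div]
  have hyinv : ∀ t, LipschitzOnWith (1 / d ^ 2) (fun y : ℝ => y⁻¹) (S t) := fun t =>
    (LipschitzWith.id.lipschitzOnWith.inv_of_le_norm hd fun y hy =>
      hy.1.trans (le_abs_self y))
  have hHinv : ∀ t, LipschitzOnWith (KH * c⁻¹ / m ^ 2) (fun y => (H (t + y / c))⁻¹) (S t) :=
    fun t => (hH.comp (hshift t).lipschitzOnWith fun y hy => hy.2).inv_of_le_norm hm
      fun y hy => hHm _ hy.2
  have hprod : ∀ t, LipschitzOnWith (d⁻¹ * (KH * c⁻¹ / m ^ 2) + m⁻¹ * (1 / d ^ 2))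
      (fun y => y⁻¹ * (H (t + y / c))⁻¹) (S t) := fun t =>
    (hyinv t).mul_of_norm_le (hHinv t)
      (fun y hy => by
        rw [norm_inv, NNReal.coe_inv]
        exact inv_anti₀ (NNReal.coe_pos.2 hd) (hy.1.trans (le_abs_self y)))
      (fun y hy => by
        rw [norm_inv, NNReal.coe_inv]
        exact inv_anti₀ (NNReal.coe_pos.2 hm) (hHm _ hy.2))
  refine ⟨c * B.toNNReal / (4 * π).toNNReal * (d⁻¹ * (KH * c⁻¹ / m ^ 2) + m⁻¹ * (1 / d ^ 2)),
    fun t ht => LipschitzOnWith.of_dist_le_mul fun y hy z hz => ?_⟩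
  have hform : ∀ y, retardedRHS c A H t y = c * A t / (4 * π) * (y⁻¹ * (H (t + y / c))⁻¹) - c :=
    fun y => by simp only [retardedRHS, div_eq_mul_inv, mul_inv]; ring
  rw [hform, hform, dist_sub_right, dist_eq_norm, ← mul_sub, norm_mul, ← dist_eq_norm]
  have hk : ‖(c : ℝ) * A t / (4 * π)‖ ≤ ↑(c * B.toNNReal / (4 * π).toNNReal) := by
    have h4π : (0 : ℝ) ≤ 4 * π := by positivity
    rw [norm_div, norm_mul, Real.norm_eq_abs, NNReal.abs_eq, Real.norm_of_nonneg h4π,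
      NNReal.coe_div, NNReal.coe_mul, Real.coe_toNNReal _ h4π, Real.norm_eq_abs]
    gcongr
    exact (hA t ht).trans (Real.le_coe_toNNReal B)
  rw [NNReal.coe_mul, mul_assoc]
  exact mul_le_mul hk ((hprod t).dist_le_mul y hy z hz) dist_nonneg (by positivity)

lemma ContDiff.cross3 {F : Type*} [NormedAddCommGroup F] [NormedSpace ℝ F] {n : WithTop ℕ∞}
    {u w : F → E3} (hu : ContDiff ℝ n u) (hw : ContDiff ℝ n w) :
    ContDiff ℝ n fun p => cross3 (u p) (w p) := by
  have hu' := contDiff_euclidean.mp hu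
  have hw' := contDiff_euclidean.mp hw
  refine contDiff_euclidean.mpr fun j => ?_
  fin_cases j <;> simp [_root_.cross3] <;> fun_prop

section TangentialField

variable {c : ℝ} {x : E3} {a f : ℝ → E3} {ν : E3} {Hν : ℝ → E3}

lemma tangentialField.apply_arrivalTime (hH : tangentialField c x a f ν Hν) {t : ℝ}
    (ht : 0 ≤ t) (i : Fin 3) :
    Hν (arrivalTime c (fun r => ‖x - a r‖) t) i =
      c / (4 * π * ‖x - a t‖ * (c + deriv (fun r => ‖x - a r‖) t)) * cross3 (f t) ν i := by
  rw [arrivalTime, hH.2 t ht]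
  rfl

lemma tangentialField.exists_lipschitzOnWith {C : ℝ≥0} (hH : tangentialField c x a f ν Hν)
    (hCc : (C : ℝ) < c) (ha : ContDiff ℝ 2 a) (hxa : ∀ t, x - a t ≠ 0)
    (hv : LipschitzWith C fun r => ‖x - a r‖) (hf : ContDiff ℝ 1 f) (i : Fin 3) (b : ℝ) :
    ∃ K, LipschitzOnWith K (fun s => Hν s i) (Icc (‖x - a 0‖ / c) b) := by
  set v : ℝ → ℝ := fun r => ‖x - a r‖
  have hv2 : ContDiff ℝ (1 + 1) v := (contDiff_const.sub ha).norm ℝ hxa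
  have hden : ContDiff ℝ 1 fun t => 4 * π * v t * (c + deriv v t) :=
    (contDiff_const.mul (hv2.of_le (by norm_num))).mul (contDiff_const.add hv2.deriv')
  have hP : ContDiff ℝ 1 fun t => c / (4 * π * v t * (c + deriv v t)) * cross3 (f t) ν i := by
    refine (contDiff_const.div hden fun t => ?_).mul
      (contDiff_euclidean.mp (hf.cross3 contDiff_const) i)
    have := add_deriv_pos_of_lipschitzWith hv hCc t
    have := norm_pos_iff.2 (hxa t)
    positivity
  obtain ⟨L, hL⟩ := hP.locallyLipschitz.locallyLipschitzOn.exists_lipschitzOnWith_of_compact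
    (isCompact_Icc (a := 0) (b := b))
  exact ⟨_, ((antilipschitzWith_arrivalTime hv hCc).lipschitzOnWith_image (h := fun s => Hν s i) hL
    fun t ht => hH.apply_arrivalTime ht.1 i).mono
      (Icc_subset_image_arrivalTime (C.2.trans_lt hCc) hv.continuous (fun _ => norm_nonneg _) b)⟩

lemma tangentialField.hasDerivAt_norm_sub (hH : tangentialField c x a f ν Hν) {t : ℝ}
    (ht : 0 ≤ t) (hv : DifferentiableAt ℝ (fun r => ‖x - a r‖) t) {i : Fin 3}
    (hHt : Hν (arrivalTime c (fun r => ‖x - a r‖) t) i ≠ 0) :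
    HasDerivAt (fun r => ‖x - a r‖)
      (retardedRHS c (fun r => cross3 (f r) ν i) (fun s => Hν s i) t ‖x - a t‖) t := by
  refine hv.hasDerivAt.congr_deriv ?_
  rw [hH.apply_arrivalTime ht] at hHt
  obtain ⟨hk, hA⟩ := mul_ne_zero_iff.mp hHt
  obtain ⟨hc, hden⟩ := div_ne_zero_iff.mp hk
  obtain ⟨h4v, hcv⟩ := mul_ne_zero_iff.mp hden
  have hvt := right_ne_zero_of_mul h4v
  rw [retardedRHS, show t + ‖x - a t‖ / c = arrivalTime c (fun r => ‖x - a r‖) t from rfl,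
    hH.apply_arrivalTime ht]
  field_simp
  ring

end TangentialField

theorem stmt_6_general (c c₀ d₁ d₀ T₀ : ℝ)
    (hc₀ : 0 < c₀) (hc₀c : c₀ < c)
    (hd₁ : 0 < d₁)
    (x : E3) (a : ℝ → E3)
    (ha : ContDiff ℝ 2 a)
    (hspeed : ∀ t : ℝ, ‖deriv a t‖ ≤ c₀)
    (hdist : ∀ t : ℝ, d₁ ≤ ‖x - a t‖ ∧ ‖x - a t‖ ≤ d₀)
    (f : ℝ → E3) (hf : ContDiff ℝ 1 f) (ν : E3) (i : Fin 3)
    (Hν : ℝ → E3) (hH : tangentialField c x a f ν Hν)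
    (m : ℝ) (hm : 0 < m)
    (hHm : ∀ s ∈ Set.Ioc (‖x - a 0‖ / c) (T₀ + d₀ / c), m ≤ |(Hν s) i|)
    (w : ℝ → ℝ) (hw : ContDiffOn ℝ 1 w (Set.Icc 0 T₀))
    (hw0 : w 0 = ‖x - a 0‖)
    (hwbd : ∀ t ∈ Set.Ioc 0 T₀, d₁ ≤ w t ∧ w t ≤ d₀ ∧ ‖x - a 0‖ / c < t + w t / c)
    (hode : ∀ t ∈ Set.Ioc 0 T₀,
      deriv w t =
        c * (cross3 (f t) ν) i /
          (4 * Real.pi * w t * (Hν (t + w t / c)) i) - c) :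
    ∀ t ∈ Set.Icc 0 T₀, w t = ‖x - a t‖ := by
  set v : ℝ → ℝ := fun r => ‖x - a r‖
  set C : ℝ≥0 := ⟨c₀, hc₀.le⟩
  have hc : 0 < c := hc₀.trans hc₀c
  have hxa : ∀ t, x - a t ≠ 0 := fun t => norm_pos_iff.1 (hd₁.trans_le (hdist t).1)
  have hv : LipschitzWith C v :=
    lipschitzWith_norm_sub_of_norm_deriv_le (C := C) (ha.differentiable (by norm_num)) hspeed x
  set J := Ioc (‖x - a 0‖ / c) (T₀ + d₀ / c)
  obtain ⟨KH, hKH⟩ := hH.exists_lipschitzOnWith (C := C) hc₀c ha hxa hv hf i (T₀ + d₀ / c)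
  obtain ⟨B, hB⟩ := (isCompact_Icc (a := 0) (b := T₀)).exists_bound_of_continuousOn
    (contDiff_euclidean.mp (hf.cross3 contDiff_const) i).continuous.continuousOn
  obtain ⟨K, hK⟩ := exists_lipschitzOnWith_retardedRHS hc hd₁ hm
    (hKH.mono Ioc_subset_Icc_self) hHm hB
  have hmem : ∀ t ∈ Ioo 0 T₀, ∀ y ∈ Icc d₁ d₀, ‖x - a 0‖ / c < t + y / c →
      y ∈ {y | d₁ ≤ y ∧ t + y / c ∈ J} := fun t ht y hy hgy =>
    ⟨hy.1, hgy, add_le_add ht.2.le (div_le_div_of_nonneg_right hy.2 hc.le)⟩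
  have hvJ : ∀ t ∈ Ioo 0 T₀, v t ∈ {y | d₁ ≤ y ∧ t + y / c ∈ J} := fun t ht =>
    hmem t ht _ (hdist t) (by simpa [arrivalTime] using strictMono_arrivalTime hv hc₀c ht.1)
  refine ODE_solution_unique_of_mem_Icc_of_hasDerivAt_Ioo
    (fun t ht => hK t (Ioo_subset_Icc_self ht)) hw.continuousOn (fun t ht => ?_)
    (fun t ht => hmem t ht _ ?_ ?_) hv.continuous.continuousOn (fun t ht => ?_) hvJ hw0
  · rw [retardedRHS, ← hode t ⟨ht.1, ht.2.le⟩]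
    exact ((hw.differentiableOn one_ne_zero t (Ioo_subset_Icc_self ht)).differentiableAt
      (Icc_mem_nhds ht.1 ht.2)).hasDerivAt
  · exact ⟨(hwbd t ⟨ht.1, ht.2.le⟩).1, (hwbd t ⟨ht.1, ht.2.le⟩).2.1⟩
  · exact (hwbd t ⟨ht.1, ht.2.le⟩).2.2
  · exact hH.hasDerivAt_norm_sub ht.1.le
      (((contDiff_const.sub ha).differentiable (by norm_num) t).norm ℝ (hxa t))
      (abs_pos.1 (hm.trans_le (hHm _ (hvJ t ht).2)))

/-- Uniqueness for the initial value problem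
`w' t = c (f t ×₃ ν) i / (4π w t (Hν (t + w t / c)) i) − c`, `w 0 = ‖x - a 0‖`:
any `C¹` solution staying in `[d₁, d₀]` with `t + w t / c > g 0` on `(0, T₀]`
coincides with the distance function `t ↦ ‖x - a t‖` on `[0, T₀]`. -/
theorem stmt_6 (c c₀ a₀ d₁ d₀ T₀ : ℝ)
    (hc₀ : 0 < c₀) (hc₀c : c₀ < c) (ha₀ : 0 < a₀)
    (hd₁ : 0 < d₁) (hd₁d₀ : d₁ ≤ d₀) (hT₀ : 0 < T₀)
    (x : E3) (a : ℝ → E3)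
    (ha : ContDiff ℝ 2 a)
    (hspeed : ∀ t : ℝ, ‖deriv a t‖ ≤ c₀)
    (hacc : ∀ t : ℝ, ‖deriv (deriv a) t‖ ≤ a₀)
    (hdist : ∀ t : ℝ, d₁ ≤ ‖x - a t‖ ∧ ‖x - a t‖ ≤ d₀)
    (f : ℝ → E3) (hf : ContDiff ℝ 1 f) (ν : E3) (i : Fin 3)
    (Hν : ℝ → E3) (hH : tangentialField c x a f ν Hν)
    (m : ℝ) (hm : 0 < m)
    (hHm : ∀ s ∈ Set.Ioc (‖x - a 0‖ / c) (T₀ + d₀ / c), m ≤ |(Hν s) i|)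
    (w : ℝ → ℝ) (hw : ContDiffOn ℝ 1 w (Set.Icc 0 T₀))
    (hw0 : w 0 = ‖x - a 0‖)
    (hwbd : ∀ t ∈ Set.Ioc 0 T₀, d₁ ≤ w t ∧ w t ≤ d₀ ∧ ‖x - a 0‖ / c < t + w t / c)
    (hode : ∀ t ∈ Set.Ioc 0 T₀,
      deriv w t =
        c * (cross3 (f t) ν) i /
          (4 * Real.pi * w t * (Hν (t + w t / c)) i) - c) :
    ∀ t ∈ Set.Icc 0 T₀, w t = ‖x - a t‖ :=
  stmt_6_general c c₀ d₁ d₀ T₀ hc₀ hc₀c hd₁ x a ha hspeed hdist f hf ν i Hν hH m hm hHm w hw hw0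
    hwbd hode
end
end

section
/- Let 0 < c₀ < c and 0 < d₁ ≤ d₀, let x ∈ ℝ³, and let a : ℝ → ℝ³ be differentiable with ‖deriv a t‖ ≤ c₀ and d₁ ≤ ‖x - a t‖ ≤ d₀ for all t. Let f : ℝ → ℝ³, ν ∈ ℝ³, and let Hν be the tangential field of the orbit a. Then for every t ≥ 0, c · ‖f t ×₃ ν‖_∞ / (4π · d₀ · (c + c₀)) ≤ ‖Hν (g t)‖_∞ ≤ c · ‖f t ×₃ ν‖_∞ / (4π · d₁ · (c − c₀)). -/
noncomputable section

/-- The maximum norm `‖y‖_∞ = maxature over i of |y i|` on `ℝ³`. -/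
def ninf (y : E3) : ℝ := ⨆ i : Fin 3, |y i|

/-!
`Hν (g t)` is the fixed vector `f t ×₃ ν` scaled by `c / (4π v (c + v'))`, and `ninf` is absolutely
homogeneous, so only this coefficient has to be bounded. The orbit has speed at most `c₀`, hence
the distance `v = ‖x - a ·‖` is `c₀`-Lipschitz and `|v'| ≤ c₀`; together with `d₁ ≤ v ≤ d₀` this
squeezes the denominator between `4π d₁ (c - c₀) > 0` and `4π d₀ (c + c₀)`.
-/

open Real

lemma ninf_nonneg (y : E3) : 0 ≤ ninf y :=
  Real.iSup_nonneg fun i => abs_nonneg (y i)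

lemma ninf_smul (k : ℝ) (y : E3) : ninf (k • y) = |k| * ninf y := by
  simp only [ninf, PiLp.smul_apply, smul_eq_mul, abs_mul, Real.mul_iSup_of_nonneg (abs_nonneg k)]

lemma abs_deriv_norm_sub_le {E : Type*} [NormedAddCommGroup E] [NormedSpace ℝ E] {a : ℝ → E}
    {C : ℝ} (ha : Differentiable ℝ a) (hC : ∀ t, ‖deriv a t‖ ≤ C) (x : E) (t : ℝ) :
    |deriv (fun r => ‖x - a r‖) t| ≤ C := by
  have hC₀ : 0 ≤ C := (norm_nonneg _).trans (hC t)
  have ha_lip : LipschitzWith C.toNNReal a :=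
    lipschitzWith_of_nnnorm_deriv_le ha fun s => by
      rw [← NNReal.coe_le_coe, coe_nnnorm, Real.coe_toNNReal _ hC₀]; exact hC s
  have hv_lip : LipschitzWith C.toNNReal fun r => ‖x - a r‖ := by
    simpa [Function.comp_def, dist_eq_norm] using (LipschitzWith.dist_right x).comp ha_lip
  simpa [Real.coe_toNNReal _ hC₀] using norm_deriv_le_of_lipschitz hv_lip

lemma tangentialCoeff_bounds {c c₀ d₁ d₀ v w : ℝ} (hc₀c : c₀ < c) (hd₁ : 0 < d₁)
    (hv : d₁ ≤ v ∧ v ≤ d₀) (hw : |w| ≤ c₀) :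
    0 < c / (4 * π * v * (c + w)) ∧ c / (4 * π * d₀ * (c + c₀)) ≤ c / (4 * π * v * (c + w)) ∧
      c / (4 * π * v * (c + w)) ≤ c / (4 * π * d₁ * (c - c₀)) := by
  obtain ⟨hw_lo, hw_hi⟩ := abs_le.mp hw
  obtain ⟨hv₁, hv₀⟩ := hv
  have hc : 0 < c := by linarith [abs_nonneg w]
  have hlo : 0 < 4 * π * d₁ * (c - c₀) := by have := sub_pos.2 hc₀c; positivity
  have hmid : 4 * π * d₁ * (c - c₀) ≤ 4 * π * v * (c + w) := by
    simp only [mul_assoc (4 * π)]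
    gcongr <;> linarith
  have hhi : 4 * π * v * (c + w) ≤ 4 * π * d₀ * (c + c₀) := by
    simp only [mul_assoc (4 * π)]
    gcongr <;> linarith
  exact ⟨div_pos hc (hlo.trans_le hmid), div_le_div_of_nonneg_left hc.le (hlo.trans_le hmid) hhi,
    div_le_div_of_nonneg_left hc.le hlo hmid⟩

theorem stmt_7_general (c c₀ d₁ d₀ : ℝ) (hc₀c : c₀ < c)
    (hd₁ : 0 < d₁)
    (x : E3) (a : ℝ → E3)
    (ha : Differentiable ℝ a)
    (hspeed : ∀ t : ℝ, ‖deriv a t‖ ≤ c₀)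
    (hdist : ∀ t : ℝ, d₁ ≤ ‖x - a t‖ ∧ ‖x - a t‖ ≤ d₀)
    (f : ℝ → E3) (ν : E3)
    (Hν : ℝ → E3) (hH : tangentialField c x a f ν Hν) :
    ∀ t : ℝ, 0 ≤ t →
      c * ninf (cross3 (f t) ν) / (4 * Real.pi * d₀ * (c + c₀)) ≤
        ninf (Hν (t + ‖x - a t‖ / c)) ∧
      ninf (Hν (t + ‖x - a t‖ / c)) ≤
        c * ninf (cross3 (f t) ν) / (4 * Real.pi * d₁ * (c - c₀)) := by
  intro t ht
  obtain ⟨hk, hlo, hhi⟩ :=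
    tangentialCoeff_bounds hc₀c hd₁ (hdist t) (abs_deriv_norm_sub_le ha hspeed x t)
  rw [hH.2 t ht, ninf_smul, abs_of_pos hk, mul_div_right_comm, mul_div_right_comm c]
  exact ⟨mul_le_mul_of_nonneg_right hlo (ninf_nonneg _),
    mul_le_mul_of_nonneg_right hhi (ninf_nonneg _)⟩

/-- Two-sided bounds on the size of the tangential field along the
reparametrized time `g t = t + ‖x - a t‖ / c`:
`c ‖f t ×₃ ν‖_∞ / (4π d₀ (c + c₀)) ≤ ‖Hν (g t)‖_∞ ≤ c ‖f t ×₃ ν‖_∞ / (4π d₁ (c − c₀))`. -/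
theorem stmt_7 (c c₀ d₁ d₀ : ℝ) (hc₀ : 0 < c₀) (hc₀c : c₀ < c)
    (hd₁ : 0 < d₁) (hd₁d₀ : d₁ ≤ d₀)
    (x : E3) (a : ℝ → E3)
    (ha : Differentiable ℝ a)
    (hspeed : ∀ t : ℝ, ‖deriv a t‖ ≤ c₀)
    (hdist : ∀ t : ℝ, d₁ ≤ ‖x - a t‖ ∧ ‖x - a t‖ ≤ d₀)
    (f : ℝ → E3) (ν : E3)
    (Hν : ℝ → E3) (hH : tangentialField c x a f ν Hν) :
    ∀ t : ℝ, 0 ≤ t →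
      c * ninf (cross3 (f t) ν) / (4 * Real.pi * d₀ * (c + c₀)) ≤
        ninf (Hν (t + ‖x - a t‖ / c)) ∧
      ninf (Hν (t + ‖x - a t‖ / c)) ≤
        c * ninf (cross3 (f t) ν) / (4 * Real.pi * d₁ * (c - c₀)) :=
  stmt_7_general c c₀ d₁ d₀ hc₀c hd₁ x a ha hspeed hdist f ν Hν hH
end
end

section
/- (Uniqueness for the inverse moving point source problem.) Let 0 < c₀ < c, a₀ > 0, 0 < d₁ ≤ d₀, T₀ > 0, set T := T₀ + d₀/c, let x₁, x₂, x₃, x₄ ∈ ℝ³ be affinely independent observation points, let ν₁, ν₂, ν₃, ν₄ ∈ ℝ³, and let f : ℝ → ℝ³ be continuously differentiable with inf_{t∈[0,T]} ‖f t ×₃ νⱼ‖_∞ > 0 for each j. Let a, ã : ℝ → ℝ³ be twice continuously differentiable orbits with ‖deriv a t‖ ≤ c₀, ‖deriv (deriv a) t‖ ≤ a₀ and d₁ ≤ ‖xⱼ - a t‖ ≤ d₀ for all t and each j (and the same bounds for ã), and let Hⱼ and H̃ⱼ be the tangential fields of a and ã relative to xⱼ and νⱼ. If Hⱼ s = H̃ⱼ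 s for all s ∈ [0, T] and all j = 1,2,3,4, then a t = ã t for all t ∈ [0, T₀]. -/
noncomputable section

/-! At one observation point `x`, the field of an orbit `a` emitted at time `t` arrives at
`g t = t + ‖x - a t‖ / c` with intensity `‖f t × ν‖ / (4π c (g t - t) g'(t))`. For two orbits
with the same data the first arrival times agree (before it the field vanishes, after it it does
not), and the retiming `ψ = g̃⁻¹ ∘ g` solves an ODE `ψ' = F(t, ψ)` with `F` Lipschitz in `ψ` and
`ψ 0 = 0`, which the identity solves as well. So `ψ = id`: both orbits stay at the same distance
from `x` on `[0, T₀]`, and four affinely independent observation points determine the source. -/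

open Set Real
open scoped RealInnerProductSpace NNReal

namespace MovingPointSource

-- `cross3 u v` is definitionally Mathlib's `crossProduct`, read through `WithLp`.
theorem contDiff_cross3_const {n : WithTop ℕ∞} {f : ℝ → E3} (hf : ContDiff ℝ n f)
    (v : E3) : ContDiff ℝ n fun t => cross3 (f t) v :=
  let L : E3 →ₗ[ℝ] E3 := (WithLp.linearEquiv 2 ℝ (Fin 3 → ℝ)).symm.toLinearMap ∘ₗ
    crossProduct.flip (WithLp.ofLp v) ∘ₗ (WithLp.linearEquiv 2 ℝ (Fin 3 → ℝ)).toLinearMap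
  (LinearMap.toContinuousLinearMap L).contDiff.comp hf

theorem ne_zero_of_pos_sInf_ninf {g : ℝ → E3} {s : Set ℝ}
    (h : 0 < sInf ((fun t => ninf (g t)) '' s)) {y : ℝ} (hy : y ∈ s) : g y ≠ 0 := by
  intro hy0
  have hbdd : BddBelow ((fun t => ninf (g t)) '' s) :=
    ⟨0, by rintro _ ⟨t, -, rfl⟩; exact Real.iSup_nonneg fun i => abs_nonneg _⟩
  have hle : sInf ((fun t => ninf (g t)) '' s) ≤ ninf (g y) := csInf_le hbdd ⟨y, hy, rfl⟩
  have hzero : ninf 0 = 0 := by simp [ninf]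
  rw [hy0, hzero] at hle
  linarith

section Distance

variable {x : E3} {a : ℝ → E3} {t : ℝ}

theorem hasDerivAt_norm_sub (ha : DifferentiableAt ℝ a t) (hx : a t ≠ x) :
    HasDerivAt (fun r => ‖x - a r‖) (⟪x - a t, -deriv a t⟫ / ‖x - a t‖) t := by
  have hpos : 0 < ‖x - a t‖ := norm_pos_iff.mpr (sub_ne_zero.mpr hx.symm)
  have hsq := (ha.hasDerivAt.const_sub x).norm_sq
  have hsqrt := hsq.sqrt (by positivity)
  simp only [Real.sqrt_sq (norm_nonneg _)] at hsqrt
  convert hsqrt using 1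
  field_simp

theorem abs_deriv_norm_sub_le (ha : DifferentiableAt ℝ a t) (hx : a t ≠ x) :
    |deriv (fun r => ‖x - a r‖) t| ≤ ‖deriv a t‖ := by
  have hpos : 0 < ‖x - a t‖ := norm_pos_iff.mpr (sub_ne_zero.mpr hx.symm)
  rw [(hasDerivAt_norm_sub ha hx).deriv, abs_div, abs_norm, div_le_iff₀ hpos]
  calc |⟪x - a t, -deriv a t⟫|
      ≤ ‖x - a t‖ * ‖-deriv a t‖ := abs_real_inner_le_norm _ _
    _ = ‖deriv a t‖ * ‖x - a t‖ := by rw [norm_neg, mul_comm]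

end Distance

structure IsAdmissibleOrbit (c d₀ : ℝ) (x : E3) (a : ℝ → E3) : Prop where
  differentiable : Differentiable ℝ a
  norm_deriv_lt : ∀ t, ‖deriv a t‖ < c
  ne_point : ∀ t, a t ≠ x
  dist_le : ∀ t, ‖x - a t‖ ≤ d₀

def arrivalTime (c : ℝ) (x : E3) (a : ℝ → E3) (t : ℝ) : ℝ := t + ‖x - a t‖ / c

theorem arrivalTime_sub_self (c : ℝ) (x : E3) (a : ℝ → E3) (t : ℝ) :
    arrivalTime c x a t - t = ‖x - a t‖ / c :=
  add_sub_cancel_left t _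

namespace IsAdmissibleOrbit

variable {c d₀ : ℝ} {x : E3} {a : ℝ → E3}

theorem c_pos (ha : IsAdmissibleOrbit c d₀ x a) : 0 < c :=
  (norm_nonneg _).trans_lt (ha.norm_deriv_lt 0)

theorem norm_sub_pos (ha : IsAdmissibleOrbit c d₀ x a) (t : ℝ) : 0 < ‖x - a t‖ :=
  norm_pos_iff.mpr (sub_ne_zero.mpr (ha.ne_point t).symm)

theorem c_add_deriv_pos (ha : IsAdmissibleOrbit c d₀ x a) (t : ℝ) :
    0 < c + deriv (fun r => ‖x - a r‖) t := by
  have := abs_lt.mp ((abs_deriv_norm_sub_le (ha.differentiable t) (ha.ne_point t)).trans_lt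
    (ha.norm_deriv_lt t))
  linarith

theorem lt_arrivalTime (ha : IsAdmissibleOrbit c d₀ x a) (t : ℝ) : t < arrivalTime c x a t := by
  have := div_pos (ha.norm_sub_pos t) ha.c_pos
  simp only [arrivalTime]
  linarith

theorem arrivalTime_le (ha : IsAdmissibleOrbit c d₀ x a) (t : ℝ) :
    arrivalTime c x a t ≤ t + d₀ / c := by
  have := div_le_div_of_nonneg_right (ha.dist_le t) ha.c_pos.le
  simp only [arrivalTime]
  linarith

theorem hasDerivAt_arrivalTime (ha : IsAdmissibleOrbit c d₀ x a) (t : ℝ) :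
    HasDerivAt (arrivalTime c x a) ((c + deriv (fun r => ‖x - a r‖) t) / c) t := by
  have hv := hasDerivAt_norm_sub (ha.differentiable t) (ha.ne_point t)
  refine ((hasDerivAt_id t).add (hv.div_const c)).congr_deriv ?_
  rw [hv.deriv, add_div, div_self ha.c_pos.ne']

theorem deriv_arrivalTime_pos (ha : IsAdmissibleOrbit c d₀ x a) (t : ℝ) :
    0 < deriv (arrivalTime c x a) t := by
  rw [(ha.hasDerivAt_arrivalTime t).deriv]
  exact div_pos (ha.c_add_deriv_pos t) ha.c_pos

theorem continuous_arrivalTime (ha : IsAdmissibleOrbit c d₀ x a) :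
    Continuous (arrivalTime c x a) :=
  continuous_iff_continuousAt.mpr fun t => (ha.hasDerivAt_arrivalTime t).continuousAt

theorem strictMono_arrivalTime (ha : IsAdmissibleOrbit c d₀ x a) :
    StrictMono (arrivalTime c x a) :=
  strictMono_of_deriv_pos ha.deriv_arrivalTime_pos

theorem surjective_arrivalTime (ha : IsAdmissibleOrbit c d₀ x a) :
    Function.Surjective (arrivalTime c x a) := by
  intro s
  have hlo : arrivalTime c x a (s - d₀ / c) ≤ s := by
    linarith [ha.arrivalTime_le (s - d₀ / c)]
  have hd₀ : 0 ≤ d₀ / c := div_nonneg ((norm_nonneg _).trans (ha.dist_le 0)) ha.c_pos.le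
  obtain ⟨t, -, ht⟩ := intermediate_value_Icc (by linarith : s - d₀ / c ≤ s)
    ha.continuous_arrivalTime.continuousOn ⟨hlo, (ha.lt_arrivalTime s).le⟩
  exact ⟨t, ht⟩

end IsAdmissibleOrbit

section TangentialField

variable {c d₀ T : ℝ} {x ν : E3} {a a' f H H' : ℝ → E3}

theorem norm_apply_arrivalTime (ha : IsAdmissibleOrbit c d₀ x a)
    (hH : tangentialField c x a f ν H) {t : ℝ} (ht : 0 ≤ t) :
    ‖H (arrivalTime c x a t)‖ = ‖cross3 (f t) ν‖ /
      (4 * π * c * ((arrivalTime c x a t - t) * deriv (arrivalTime c x a) t)) := by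
  have hv := ha.norm_sub_pos t
  have hv' := ha.c_add_deriv_pos t
  have hc := ha.c_pos
  rw [arrivalTime_sub_self, (ha.hasDerivAt_arrivalTime t).deriv, arrivalTime, hH.2 t ht,
    norm_smul, Real.norm_of_nonneg (by positivity)]
  field_simp

theorem apply_arrivalTime_ne_zero (ha : IsAdmissibleOrbit c d₀ x a)
    (hH : tangentialField c x a f ν H) {t : ℝ} (ht : 0 ≤ t) (hw : cross3 (f t) ν ≠ 0) :
    H (arrivalTime c x a t) ≠ 0 := by
  have hsub := sub_pos.mpr (ha.lt_arrivalTime t)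
  have hder := ha.deriv_arrivalTime_pos t
  have hc := ha.c_pos
  rw [← norm_pos_iff, norm_apply_arrivalTime ha hH ht]
  exact div_pos (norm_pos_iff.mpr hw) (by positivity)

-- At the first arrival time of `a'` the field of `a'` is already nonzero, while that of `a`
-- would still vanish.
theorem norm_sub_zero_le_of_eqOn (ha' : IsAdmissibleOrbit c d₀ x a')
    (hH : tangentialField c x a f ν H) (hH' : tangentialField c x a' f ν H')
    (hw : cross3 (f 0) ν ≠ 0) (hT : d₀ / c ≤ T) (hdata : ∀ s ∈ Icc 0 T, H s = H' s) :
    ‖x - a 0‖ ≤ ‖x - a' 0‖ := by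
  by_contra! hlt
  have hstart : arrivalTime c x a' 0 = ‖x - a' 0‖ / c := zero_add _
  have hmem : arrivalTime c x a' 0 ∈ Icc 0 T :=
    ⟨(ha'.lt_arrivalTime 0).le, by linarith [ha'.arrivalTime_le 0]⟩
  refine apply_arrivalTime_ne_zero ha' hH' le_rfl hw ?_
  rw [← hdata _ hmem, hstart]
  exact hH.1 _ (div_lt_div_of_pos_right hlt ha'.c_pos)

theorem arrivalTime_zero_eq_of_eqOn (ha : IsAdmissibleOrbit c d₀ x a)
    (ha' : IsAdmissibleOrbit c d₀ x a')
    (hH : tangentialField c x a f ν H) (hH' : tangentialField c x a' f ν H')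
    (hw : cross3 (f 0) ν ≠ 0) (hT : d₀ / c ≤ T) (hdata : ∀ s ∈ Icc 0 T, H s = H' s) :
    arrivalTime c x a 0 = arrivalTime c x a' 0 := by
  have h := le_antisymm (norm_sub_zero_le_of_eqOn ha' hH hH' hw hT hdata)
    (norm_sub_zero_le_of_eqOn ha hH' hH hw hT fun s hs => (hdata s hs).symm)
  simp only [arrivalTime, h]

end TangentialField

section Retiming

/- For arrival times `g, h` of two orbits and `ψ = h⁻¹ ∘ g`, equal field intensities
`ρ t / ((g t - t) g'(t)) = ρ s / ((h s - s) h'(s))` at `s = ψ t`, where `h s = g t`, turn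
`ψ' = g'(t) / h'(s)` into `ψ' = retimingField g ρ t ψ`. The identity solves the same
equation. -/
def retimingField (p ρ : ℝ → ℝ) (t y : ℝ) : ℝ := (p t - y) * ρ t / ((p t - t) * ρ y)

theorem retimingField_self {p ρ : ℝ → ℝ} {t : ℝ} (hp : t < p t) (hρ : ρ t ≠ 0) :
    retimingField p ρ t t = 1 := by
  have := (sub_pos.mpr hp).ne'
  unfold retimingField
  field_simp

theorem lipschitzOnWith_sub_div {ρ : ℝ → ℝ} {s : Set ℝ} {p B C : ℝ} {L : ℝ≥0}
    (hρ : LipschitzOnWith L ρ s) (hρpos : ∀ y ∈ s, 0 < ρ y)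
    (hC : ∀ y ∈ s, (ρ y)⁻¹ ≤ C) (hB : ∀ y ∈ s, |p - y| ≤ B) :
    LipschitzOnWith (Real.toNNReal (B * L * C ^ 2 + C)) (fun y => (p - y) / ρ y) s := by
  refine LipschitzOnWith.of_dist_le_mul fun y hy z hz => ?_
  have hy0 := hρpos y hy
  have hz0 := hρpos z hz
  have hCy := hC y hy
  have hCz := hC z hz
  have hC0 : 0 ≤ C := (inv_pos.mpr hy0).le.trans hCy
  have hB0 : 0 ≤ B := (abs_nonneg _).trans (hB y hy)
  have hρyz : |ρ z - ρ y| ≤ L * |y - z| := by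
    simpa [Real.dist_eq, abs_sub_comm] using hρ.dist_le_mul y hy z hz
  have hsplit : (p - y) / ρ y - (p - z) / ρ z =
      (p - y) * (ρ z - ρ y) * ((ρ y)⁻¹ * (ρ z)⁻¹) - (y - z) * (ρ z)⁻¹ := by
    field_simp
    ring
  rw [Real.dist_eq, Real.dist_eq, Real.coe_toNNReal _ (by positivity), hsplit]
  calc |(p - y) * (ρ z - ρ y) * ((ρ y)⁻¹ * (ρ z)⁻¹) - (y - z) * (ρ z)⁻¹|
      ≤ |p - y| * |ρ z - ρ y| * ((ρ y)⁻¹ * (ρ z)⁻¹) + |y - z| * (ρ z)⁻¹ := by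
        refine (abs_sub _ _).trans_eq ?_
        rw [abs_mul, abs_mul, abs_mul, abs_mul, abs_of_pos (inv_pos.mpr hy0),
          abs_of_pos (inv_pos.mpr hz0)]
    _ ≤ B * (L * |y - z|) * (C * C) + |y - z| * C := by gcongr; exact hB y hy
    _ = (B * L * C ^ 2 + C) * |y - z| := by ring

theorem exists_lipschitzOnWith_retimingField {p ρ : ℝ → ℝ} {T₀ T : ℝ} {L : ℝ≥0}
    (hρ : LipschitzOnWith L ρ (Icc 0 T)) (hρpos : ∀ y ∈ Icc 0 T, 0 < ρ y)
    (hp : ContinuousOn p (Icc 0 T₀)) (hpt : ∀ t ∈ Icc 0 T₀, t < p t) (hT₀T : T₀ ≤ T) :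
    ∃ K, ∀ t ∈ Icc 0 T₀, LipschitzOnWith K (retimingField p ρ t) (Icc 0 T) := by
  obtain ⟨C, hC⟩ := isCompact_Icc.exists_bound_of_continuousOn
    (hρ.continuousOn.inv₀ fun y hy => (hρpos y hy).ne')
  obtain ⟨B, hB⟩ := isCompact_Icc.exists_bound_of_continuousOn hp
  obtain ⟨K, hK⟩ := isCompact_Icc.exists_bound_of_continuousOn
    ((hρ.continuousOn.mono (Icc_subset_Icc_right hT₀T)).div (hp.sub continuousOn_id)
      fun t ht => (sub_pos.mpr (hpt t ht)).ne')
  refine ⟨Real.toNNReal K * Real.toNNReal ((B + T) * L * C ^ 2 + C), fun t ht => ?_⟩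
  have hquot := lipschitzOnWith_sub_div (p := p t) (B := B + T) hρ hρpos
    (fun y hy => (le_abs_self _).trans (by simpa using hC y hy))
    (fun y hy => (abs_sub _ _).trans (add_le_add (by simpa using hB t ht)
      ((abs_of_nonneg hy.1).le.trans hy.2)))
  have hfactor : retimingField p ρ t =
      (fun u => (ρ t / (p t - t)) • u) ∘ fun y => (p t - y) / ρ y := by
    have := (sub_pos.mpr (hpt t ht)).ne'
    ext y
    rw [retimingField, Function.comp_apply, smul_eq_mul]
    field_simp
  rw [hfactor]
  refine ((lipschitzWith_smul _).comp_lipschitzOnWith hquot).weaken ?_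
  gcongr
  rw [← NNReal.coe_le_coe, coe_nnnorm, Real.coe_toNNReal']
  exact (hK t ht).trans (le_max_left _ _)

theorem eqOn_id_of_hasDerivWithinAt_retimingField {ψ p ρ : ℝ → ℝ} {T₀ T : ℝ}
    {L : ℝ≥0}
    (hρ : LipschitzOnWith L ρ (Icc 0 T)) (hρpos : ∀ y ∈ Icc 0 T, 0 < ρ y)
    (hp : ContinuousOn p (Icc 0 T₀)) (hpt : ∀ t ∈ Icc 0 T₀, t < p t) (hT₀T : T₀ ≤ T)
    (hψ : ContinuousOn ψ (Icc 0 T₀)) (hψ0 : ψ 0 = 0)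
    (hψT : ∀ t ∈ Ico 0 T₀, ψ t ∈ Icc 0 T)
    (hψ' : ∀ t ∈ Ico 0 T₀, HasDerivWithinAt ψ (retimingField p ρ t (ψ t)) (Ici t) t) :
    EqOn ψ id (Icc 0 T₀) := by
  obtain ⟨K, hK⟩ := exists_lipschitzOnWith_retimingField hρ hρpos hp hpt hT₀T
  have hT : ∀ t ∈ Ico 0 T₀, t ∈ Icc 0 T := fun t ht => ⟨ht.1, ht.2.le.trans hT₀T⟩
  refine ODE_solution_unique_of_mem_Icc_right (s := fun _ => Icc 0 T)
    (fun t ht => hK t (Ico_subset_Icc_self ht)) hψ hψ' hψT continuousOn_id (fun t ht => ?_)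
    hT hψ0
  rw [id, retimingField_self (hpt t (Ico_subset_Icc_self ht)) (hρpos t (hT t ht)).ne']
  exact hasDerivWithinAt_id t _

end Retiming

section OnePoint

variable {c d₀ T₀ : ℝ} {x ν : E3} {a a' f H H' : ℝ → E3}

theorem hasDerivAt_retiming (ha : IsAdmissibleOrbit c d₀ x a)
    (ha' : IsAdmissibleOrbit c d₀ x a')
    (hH : tangentialField c x a f ν H) (hH' : tangentialField c x a' f ν H')
    {G : ℝ ≃o ℝ} (hG : ⇑G = arrivalTime c x a') {t : ℝ} (ht : 0 ≤ t)
    (hψt : 0 ≤ G.symm (arrivalTime c x a t))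
    (hdata : H (arrivalTime c x a t) = H' (arrivalTime c x a t))
    (hwt : cross3 (f t) ν ≠ 0) (hwψ : cross3 (f (G.symm (arrivalTime c x a t))) ν ≠ 0) :
    HasDerivAt (fun s => G.symm (arrivalTime c x a s))
      (retimingField (arrivalTime c x a) (fun s => ‖cross3 (f s) ν‖) t
        (G.symm (arrivalTime c x a t))) t := by
  set ψt := G.symm (arrivalTime c x a t)
  have hGG (s : ℝ) : arrivalTime c x a' (G.symm s) = s := by rw [← hG]; exact G.apply_symm_apply s
  have hinv := HasDerivAt.of_local_left_inverse G.symm.continuous.continuousAt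
    (ha'.hasDerivAt_arrivalTime ψt).differentiableAt.hasDerivAt
    (ha'.deriv_arrivalTime_pos ψt).ne' (Filter.Eventually.of_forall hGG)
  refine (hinv.comp t (ha.hasDerivAt_arrivalTime t).differentiableAt.hasDerivAt).congr_deriv ?_
  have hnorm := congrArg norm hdata
  rw [norm_apply_arrivalTime ha hH ht, ← hGG (arrivalTime c x a t),
    norm_apply_arrivalTime ha' hH' hψt, hGG] at hnorm
  have := ha.deriv_arrivalTime_pos t
  have := ha'.deriv_arrivalTime_pos ψt
  have := sub_pos.mpr (ha.lt_arrivalTime t)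
  have := hGG (arrivalTime c x a t) ▸ sub_pos.mpr (ha'.lt_arrivalTime ψt)
  have := norm_pos_iff.mpr hwt
  have := norm_pos_iff.mpr hwψ
  have := ha.c_pos
  have := pi_pos
  rw [retimingField]
  field_simp at hnorm ⊢
  linear_combination -hnorm

theorem norm_sub_eq_of_tangentialField_eqOn (ha : IsAdmissibleOrbit c d₀ x a)
    (ha' : IsAdmissibleOrbit c d₀ x a')
    (hH : tangentialField c x a f ν H) (hH' : tangentialField c x a' f ν H') {L : ℝ≥0}
    (hρ : LipschitzOnWith L (fun t => ‖cross3 (f t) ν‖) (Icc 0 (T₀ + d₀ / c)))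
    (hw : ∀ t ∈ Icc 0 (T₀ + d₀ / c), cross3 (f t) ν ≠ 0) (hT₀ : 0 ≤ T₀)
    (hdata : ∀ s ∈ Icc 0 (T₀ + d₀ / c), H s = H' s) :
    ∀ t ∈ Icc 0 T₀, ‖x - a t‖ = ‖x - a' t‖ := by
  set T := T₀ + d₀ / c
  have hd₀ : 0 ≤ d₀ / c := div_nonneg ((norm_nonneg _).trans (ha.dist_le 0)) ha.c_pos.le
  have hT₀T : Icc 0 T₀ ⊆ Icc 0 T := Icc_subset_Icc_right (by linarith)
  -- `ψ t` is the emission time along `a'` whose signal reaches `x` together with that of `a t`.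
  let G : ℝ ≃o ℝ :=
    ha'.strictMono_arrivalTime.orderIsoOfSurjective _ ha'.surjective_arrivalTime
  set ψ : ℝ → ℝ := fun t => G.symm (arrivalTime c x a t)
  have hgψ (t : ℝ) : arrivalTime c x a' (ψ t) = arrivalTime c x a t :=
    ha'.strictMono_arrivalTime.orderIsoOfSurjective_self_symm_apply _ _ _
  have hg0 : arrivalTime c x a 0 = arrivalTime c x a' 0 :=
    arrivalTime_zero_eq_of_eqOn ha ha' hH hH' (hw 0 ⟨le_rfl, by linarith⟩) (by linarith) hdata
  have hgT (t : ℝ) (ht : t ∈ Icc 0 T₀) : arrivalTime c x a t ∈ Icc 0 T :=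
    ⟨ht.1.trans (ha.lt_arrivalTime t).le, (ha.arrivalTime_le t).trans (by linarith [ht.2])⟩
  have hψT (t : ℝ) (ht : t ∈ Icc 0 T₀) : ψ t ∈ Icc 0 T := by
    refine ⟨ha'.strictMono_arrivalTime.le_iff_le.mp ?_, ?_⟩
    · rw [hgψ, ← hg0]
      exact ha.strictMono_arrivalTime.monotone ht.1
    · linarith [ha'.lt_arrivalTime (ψ t), hgψ t, (hgT t ht).2]
  have hψid : EqOn ψ id (Icc 0 T₀) := by
    refine eqOn_id_of_hasDerivWithinAt_retimingField hρ (fun s hs => norm_pos_iff.mpr (hw s hs))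
      ha.continuous_arrivalTime.continuousOn (fun t _ => ha.lt_arrivalTime t) (by linarith)
      (G.symm.continuous.comp ha.continuous_arrivalTime).continuousOn
      (ha'.strictMono_arrivalTime.injective ((hgψ 0).trans hg0))
      (fun t ht => hψT t (Ico_subset_Icc_self ht)) fun t ht => ?_
    have ht := Ico_subset_Icc_self ht
    exact (hasDerivAt_retiming ha ha' hH hH' (StrictMono.coe_orderIsoOfSurjective _ _ _) ht.1
      (hψT t ht).1 (hdata _ (hgT t ht)) (hw t (hT₀T ht)) (hw _ (hψT t ht))).hasDerivWithinAt
  intro t ht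
  have hgt := hgψ t
  rw [hψid ht, id, arrivalTime, arrivalTime, add_right_inj, div_left_inj' ha.c_pos.ne'] at hgt
  exact hgt.symm

end OnePoint

theorem eq_of_forall_dist_eq_of_affineSpan_eq_top {V P : Type*} [NormedAddCommGroup V]
    [InnerProductSpace ℝ V] [MetricSpace P] [NormedAddTorsor V P] {s : Set P}
    (hs : affineSpan ℝ s = ⊤) {p q : P} (h : ∀ y ∈ s, dist y p = dist y q) : p = q := by
  rw [← AffineSubspace.perpBisector_eq_top, eq_top_iff, ← hs, affineSpan_le]
  exact fun y hy => AffineSubspace.mem_perpBisector_iff_dist_eq.mpr (h y hy)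

end MovingPointSource

open MovingPointSource in
theorem stmt_12_general (c c₀ d₁ d₀ T₀ : ℝ)
    (hc₀c : c₀ < c)
    (hd₁ : 0 < d₁) (hT₀ : 0 < T₀)
    (x : Fin 4 → E3) (hx : AffineIndependent ℝ x)
    (ν : Fin 4 → E3) (f : ℝ → E3) (hf : ContDiff ℝ 1 f)
    (hη : ∀ j : Fin 4,
      0 < sInf ((fun t : ℝ => ninf (cross3 (f t) (ν j))) '' Set.Icc 0 (T₀ + d₀ / c)))
    (a a' : ℝ → E3)
    (ha : ContDiff ℝ 2 a) (ha' : ContDiff ℝ 2 a')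
    (hspeed : ∀ t : ℝ, ‖deriv a t‖ ≤ c₀) (hspeed' : ∀ t : ℝ, ‖deriv a' t‖ ≤ c₀)
    (hdist : ∀ (j : Fin 4) (t : ℝ), d₁ ≤ ‖x j - a t‖ ∧ ‖x j - a t‖ ≤ d₀)
    (hdist' : ∀ (j : Fin 4) (t : ℝ), d₁ ≤ ‖x j - a' t‖ ∧ ‖x j - a' t‖ ≤ d₀)
    (H H' : Fin 4 → ℝ → E3)
    (hH : ∀ j : Fin 4, tangentialField c (x j) a f (ν j) (H j))
    (hH' : ∀ j : Fin 4, tangentialField c (x j) a' f (ν j) (H' j))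
    (hdata : ∀ (j : Fin 4), ∀ s ∈ Set.Icc (0 : ℝ) (T₀ + d₀ / c), H j s = H' j s) :
    ∀ t ∈ Set.Icc (0 : ℝ) T₀, a t = a' t := by
  have admissible (b : ℝ → E3) (hb : ContDiff ℝ 2 b) (hb' : ∀ t, ‖deriv b t‖ ≤ c₀)
      (hbx : ∀ j t, d₁ ≤ ‖x j - b t‖ ∧ ‖x j - b t‖ ≤ d₀) (j : Fin 4) :
      IsAdmissibleOrbit c d₀ (x j) b := by
    refine ⟨hb.differentiable two_ne_zero, fun t => (hb' t).trans_lt hc₀c, fun t hbt => ?_,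
      fun t => (hbx j t).2⟩
    have := (hbx j t).1
    rw [hbt, sub_self, norm_zero] at this
    linarith
  have hspan : affineSpan ℝ (range x) = ⊤ := by
    rw [hx.affineSpan_eq_top_iff_card_eq_finrank_add_one, finrank_euclideanSpace_fin]
    rfl
  intro t ht
  refine eq_of_forall_dist_eq_of_affineSpan_eq_top hspan ?_
  rintro _ ⟨j, rfl⟩
  obtain ⟨L, hL⟩ := (contDiff_cross3_const hf (ν j)).contDiffOn.exists_lipschitzOnWith
    one_ne_zero (convex_Icc 0 (T₀ + d₀ / c)) isCompact_Icc
  simp only [dist_eq_norm]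
  exact norm_sub_eq_of_tangentialField_eqOn (admissible a ha hspeed hdist j)
    (admissible a' ha' hspeed' hdist' j) (hH j) (hH' j)
    (lipschitzWith_one_norm.comp_lipschitzOnWith hL)
    (fun s hs => ne_zero_of_pos_sInf_ninf (hη j) hs) hT₀.le (hdata j) t ht

/-- **Uniqueness for the inverse moving point source problem.** If the
tangential fields of two admissible orbits `a, a'` coincide on `[0, T]`, `T = T₀ + d₀/c`,
at four non-coplanar observation points, then the orbits coincide on `[0, T₀]`. -/
theorem stmt_12 (c c₀ a₀ d₁ d₀ T₀ : ℝ)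
    (hc₀ : 0 < c₀) (hc₀c : c₀ < c) (ha₀ : 0 < a₀)
    (hd₁ : 0 < d₁) (hd₁d₀ : d₁ ≤ d₀) (hT₀ : 0 < T₀)
    (x : Fin 4 → E3) (hx : AffineIndependent ℝ x)
    (ν : Fin 4 → E3) (f : ℝ → E3) (hf : ContDiff ℝ 1 f)
    (hη : ∀ j : Fin 4,
      0 < sInf ((fun t : ℝ => ninf (cross3 (f t) (ν j))) '' Set.Icc 0 (T₀ + d₀ / c)))
    (a a' : ℝ → E3)
    (ha : ContDiff ℝ 2 a) (ha' : ContDiff ℝ 2 a')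
    (hspeed : ∀ t : ℝ, ‖deriv a t‖ ≤ c₀) (hspeed' : ∀ t : ℝ, ‖deriv a' t‖ ≤ c₀)
    (hacc : ∀ t : ℝ, ‖deriv (deriv a) t‖ ≤ a₀) (hacc' : ∀ t : ℝ, ‖deriv (deriv a') t‖ ≤ a₀)
    (hdist : ∀ (j : Fin 4) (t : ℝ), d₁ ≤ ‖x j - a t‖ ∧ ‖x j - a t‖ ≤ d₀)
    (hdist' : ∀ (j : Fin 4) (t : ℝ), d₁ ≤ ‖x j - a' t‖ ∧ ‖x j - a' t‖ ≤ d₀)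
    (H H' : Fin 4 → ℝ → E3)
    (hH : ∀ j : Fin 4, tangentialField c (x j) a f (ν j) (H j))
    (hH' : ∀ j : Fin 4, tangentialField c (x j) a' f (ν j) (H' j))
    (hdata : ∀ (j : Fin 4), ∀ s ∈ Set.Icc (0 : ℝ) (T₀ + d₀ / c), H j s = H' j s) :
    ∀ t ∈ Set.Icc (0 : ℝ) T₀, a t = a' t :=
  stmt_12_general c c₀ d₁ d₀ T₀ hc₀c hd₁ hT₀ x hx ν f hf hη a a' ha ha' hspeed hspeed' hdist hdist'
    H H' hH hH' hdata
end
end
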